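/- arXiv:1606.00667 — 3 statements merged into one kernel-verified Lean document; each statement's English description precedes it below -/
import Mathlib

section
/- Let D be a virtual knot diagram with cut system P. Then a classical crossing c of D is odd (i.e., the arc I_c of the Gauss circle from the tail of the chord γ_c to its head contains an odd number of chord endpoints) if and only if the two endpoints of γ_c lie on arcs A_k, A_j (between consecutive cut points) with k ≢ j (mod 2). Consequently, in the double covering φ(D,P), the crossing corresponding to c on the D-copy is a non-self-crossing (its two strands lie on different components of the 2-component link φ(D,P)) exactly when c is odd. -/
open scoped Classical

/-- Cyclic strict betweenness on `ZMod N`: `x` lies strictly between `a` and `b`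
on the arc travelling from `a` to `b` in the positive direction. -/
def strictBtw {N : ℕ} (a b x : ZMod N) : Prop :=
  (x - a).val < (b - a).val ∧ x ≠ a

/-- `P` is a cut system of the virtual knot diagram with Gauss circle `ZMod N`,
chord endpoint set `E` and cut point set `P`: there is an alternate orientation,
i.e. a labelling `ε` of positions by `ZMod 2` flipping exactly when passing a
cut point or a chord endpoint, and with the two endpoints of each chord
oppositely labelled (one a source, the other a sink). -/
def IsCutSystem {N : ℕ} (chords : Finset (ZMod N × ZMod N))
    (E P : Finset (ZMod N)) : Prop :=
  ∃ ε : ZMod N → ZMod 2,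
    (∀ x : ZMod N, ε (x + 1) = ε x + (if x + 1 ∈ P then 1 else 0)
        + (if x + 1 ∈ E then 1 else 0)) ∧
    (∀ c ∈ chords, ε c.1 ≠ ε c.2)

/-- A chord `(t, h)` (tail `t`, head `h`) is odd if the arc `I_c` from the tail
to the head contains an odd number of chord endpoints. -/
def IsOddChord {N : ℕ} (E : Finset (ZMod N)) (c : ZMod N × ZMod N) : Prop :=
  Odd ((E.filter (fun x => strictBtw c.1 c.2 x)).card)

/-- Successor in the double covering: two copies (`Bool`) of the circle, crossing
to the other copy exactly when passing a cut point. -/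
def coverSucc {N : ℕ} (P : Finset (ZMod N)) (x : ZMod N × Bool) :
    ZMod N × Bool :=
  if x.1 + 1 ∈ P then (x.1 + 1, !x.2) else (x.1 + 1, x.2)

/-- Two positions of the double covering lie on the same component. -/
def SameComp {N : ℕ} (P : Finset (ZMod N)) (x y : ZMod N × Bool) : Prop :=
  ∃ k : ℕ, (coverSucc P)^[k] x = y ∨ (coverSucc P)^[k] y = x

section Aux
variable {N : ℕ} [NeZero N]

/-- count of points of `S` among `a+1, …, a+k`. -/
noncomputable def cnt (S : Finset (ZMod N)) (a : ZMod N) (k : ℕ) : ℕ :=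
  ∑ i ∈ Finset.range k, (if a + (i : ZMod N) + 1 ∈ S then 1 else 0)

lemma cnt_add (S : Finset (ZMod N)) (a : ZMod N) (m n : ℕ) :
    cnt S a (m + n) = cnt S a m + cnt S (a + (m : ZMod N)) n := by
  unfold cnt
  rw [Finset.sum_range_add]
  congr 1
  apply Finset.sum_congr rfl
  intro i _
  congr 1
  push_cast
  ring_nf

lemma cnt_succ (S : Finset (ZMod N)) (a : ZMod N) (k : ℕ) :
    cnt S a (k + 1) = cnt S a k + (if a + (k : ZMod N) + 1 ∈ S then 1 else 0) := by
  unfold cnt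
  rw [Finset.sum_range_succ]

lemma cnt_eq_filter (S : Finset (ZMod N)) (a : ZMod N) (k : ℕ) :
    cnt S a k = ((Finset.range k).filter (fun i : ℕ => a + (i : ZMod N) + 1 ∈ S)).card := by
  exact (Finset.card_filter _ _).symm

/-- going once around the circle meets every point of `S` exactly once. -/
lemma cnt_circle (S : Finset (ZMod N)) (a : ZMod N) : cnt S a N = S.card := by
  rw [cnt_eq_filter]
  apply Finset.card_bij (fun (i : ℕ) (_ : i ∈ _) => a + (i : ZMod N) + 1)
  · intro i hi
    exact (Finset.mem_filter.mp hi).2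
  · intro i hi j hj h
    simp only [Finset.mem_filter, Finset.mem_range] at hi hj
    have : ((i : ZMod N)) = (j : ZMod N) := by linear_combination h
    have hv := congrArg ZMod.val this
    rwa [ZMod.val_cast_of_lt hi.1, ZMod.val_cast_of_lt hj.1] at hv
  · intro x hx
    refine ⟨(x - a - 1).val, ?_, ?_⟩
    · simp only [Finset.mem_filter, Finset.mem_range]
      constructor
      · exact ZMod.val_lt _
      · rw [ZMod.natCast_rightInverse (x - a - 1)]
        convert hx using 2
        ring
    · rw [ZMod.natCast_rightInverse (x - a - 1)]
      ring

lemma cnt_arc (S : Finset (ZMod N)) (a : ZMod N) (k : ℕ) (hk : k < N) :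
    cnt S a k = (S.filter (fun x => x ≠ a ∧ (x - a).val ≤ k)).card := by
  rw [cnt_eq_filter]
  apply Finset.card_bij (fun (i : ℕ) (_ : i ∈ _) => a + (i : ZMod N) + 1)
  · intro i hi
    simp only [Finset.mem_filter, Finset.mem_range] at hi ⊢
    have hi1 : i + 1 < N := by omega
    have hsub : (a + (i : ZMod N) + 1) - a = ((i + 1 : ℕ) : ZMod N) := by push_cast; ring
    have hval : ((a + (i : ZMod N) + 1) - a).val = i + 1 := by
      rw [hsub, ZMod.val_cast_of_lt hi1]
    refine ⟨hi.2, ?_, by omega⟩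
    · intro h
      rw [h] at hval
      simp at hval
  · intro i hi j hj h
    simp only [Finset.mem_filter, Finset.mem_range] at hi hj
    have : ((i : ZMod N)) = (j : ZMod N) := by linear_combination h
    have hv := congrArg ZMod.val this
    rwa [ZMod.val_cast_of_lt (by omega : i < N), ZMod.val_cast_of_lt (by omega : j < N)] at hv
  · intro x hx
    simp only [Finset.mem_filter] at hx
    obtain ⟨hxS, hxa, hxk⟩ := hx
    have hv0 : (x - a).val ≠ 0 := by
      rw [Ne, ZMod.val_eq_zero, sub_eq_zero]
      exact hxa
    refine ⟨(x - a).val - 1, ?_, ?_⟩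
    · simp only [Finset.mem_filter, Finset.mem_range]
      constructor
      · omega
      · have : ((( (x - a).val - 1 : ℕ)) : ZMod N) = x - a - 1 := by
          have h1 : (((x - a).val : ℕ) : ZMod N) = x - a := ZMod.natCast_rightInverse _
          have h2 : (x - a).val - 1 + 1 = (x - a).val := by omega
          have := congrArg (fun m : ℕ => (m : ZMod N)) h2
          push_cast at this
          rw [h1] at this
          linear_combination this
        rw [this]
        convert hxS using 2
        ring
    · have h1 : (((x - a).val : ℕ) : ZMod N) = x - a := ZMod.natCast_rightInverse _
      have h2 : (x - a).val - 1 + 1 = (x - a).val := by omega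
      have h3 := congrArg (fun m : ℕ => (m : ZMod N)) h2
      push_cast at h3
      rw [h1] at h3
      linear_combination h3

lemma arc_split (S : Finset (ZMod N)) (a b : ZMod N) (hab : a ≠ b) :
    (S.filter (fun x => x ≠ a ∧ (x - a).val ≤ (b - a).val)).card
      = (S.filter (fun x => strictBtw a b x)).card + (if b ∈ S then 1 else 0) := by
  have hpred : ∀ x : ZMod N, (x ≠ a ∧ (x - a).val ≤ (b - a).val) ↔ (strictBtw a b x ∨ x = b) := by
    intro x
    constructor
    · rintro ⟨hxa, hle⟩
      rcases lt_or_eq_of_le hle with h | h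
      · exact Or.inl ⟨h, hxa⟩
      · right
        have h1 : (((x - a).val : ℕ) : ZMod N) = x - a := ZMod.natCast_rightInverse _
        have h2 : (((b - a).val : ℕ) : ZMod N) = b - a := ZMod.natCast_rightInverse _
        have : x - a = b - a := by rw [← h1, ← h2, h]
        linear_combination this
    · rintro (⟨h1, h2⟩ | rfl)
      · exact ⟨h2, le_of_lt h1⟩
      · refine ⟨hab.symm, le_refl _⟩
  rw [Finset.filter_congr (fun x _ => by rw [hpred x])]
  rw [Finset.filter_or, Finset.card_union_of_disjoint, Finset.filter_eq']
  · congr 1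
    split <;> simp
  · rw [Finset.disjoint_left]
    intro x hx hx'
    simp only [Finset.mem_filter] at hx hx'
    rcases hx' with ⟨-, rfl⟩
    exact absurd hx.2.1 (lt_irrefl _)

lemma cnt_period (S : Finset (ZMod N)) (a : ZMod N) (r q : ℕ) :
    cnt S a (r + q * N) = cnt S a r + q * S.card := by
  induction q with
  | zero => simp
  | succ q ih =>
    have : r + (q + 1) * N = (r + q * N) + N := by ring
    rw [this, cnt_add, ih, cnt_circle]
    ring

end Aux

section Aux2
variable {N : ℕ} [NeZero N]

lemma iter_cover (P : Finset (ZMod N)) (a : ZMod N) (s : Bool) (k : ℕ) :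
    (coverSucc P)^[k] (a, s) = (a + (k : ZMod N), if Odd (cnt P a k) then !s else s) := by
  induction k with
  | zero => simp [cnt]
  | succ k ih =>
    rw [Function.iterate_succ_apply', ih, cnt_succ]
    have hc : a + ((k+1 : ℕ) : ZMod N) = a + (k : ZMod N) + 1 := by push_cast; ring
    by_cases hm : a + (k : ZMod N) + 1 ∈ P
    · simp only [coverSucc, hm, if_pos, hc]
      by_cases ho : Odd (cnt P a k)
      · have : ¬ Odd (cnt P a k + 1) := by simp [Nat.odd_add_one, ho]
        simp [ho, this]
      · have : Odd (cnt P a k + 1) := by simp [Nat.odd_add_one, ho]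
        simp [ho, this]
    · simp only [coverSucc, hm, if_neg, hc]
      simp only [not_false_iff, if_false]
      simp [hm]

lemma telescope (P E : Finset (ZMod N)) (ε : ZMod N → ZMod 2)
    (hε : ∀ x : ZMod N, ε (x + 1) = ε x + (if x + 1 ∈ P then 1 else 0)
        + (if x + 1 ∈ E then 1 else 0)) (a : ZMod N) (k : ℕ) :
    ε (a + (k : ZMod N)) = ε a + (cnt P a k : ZMod 2) + (cnt E a k : ZMod 2) := by
  induction k with
  | zero => simp [cnt]
  | succ k ih =>
    have hc : a + ((k+1 : ℕ) : ZMod N) = (a + (k : ZMod N)) + 1 := by push_cast; ring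
    rw [hc, hε (a + (k : ZMod N)), ih, cnt_succ, cnt_succ]
    push_cast
    ring

end Aux2

lemma odd_add_even_iff {m n : ℕ} (h : Even n) : Odd (m + n) ↔ Odd m := by
  obtain ⟨t, rfl⟩ := h
  rw [Nat.odd_iff, Nat.odd_iff]
  omega


/-- Let `D` be a virtual knot diagram with cut system `P`.  A classical crossing
`c` is odd if and only if the two endpoints of its chord lie on arcs `A_k`,
`A_j` (between consecutive cut points) with `k ≢ j (mod 2)`, i.e. iff the arc
`I_c` contains an odd number of cut points; consequently, in the double
covering `φ(D,P)` the crossing corresponding to `c` on the `D`-copy is a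
non-self-crossing (its two strands lie on different components of the
2-component link `φ(D,P)`) exactly when `c` is odd. -/
theorem oddChord_iff_arcs_of_different_parity {N : ℕ} [NeZero N]
    (chords : Finset (ZMod N × ZMod N)) (E P : Finset (ZMod N))
    (hE : E = chords.image Prod.fst ∪ chords.image Prod.snd)
    (hproper : ∀ c ∈ chords, c.1 ≠ c.2)
    (hdistinct : E.card = 2 * chords.card)
    (hPE : Disjoint P E)
    (hcut : IsCutSystem chords E P) :
    ∀ c ∈ chords,
      (IsOddChord E c ↔
        Odd ((P.filter (fun x => strictBtw c.1 c.2 x)).card)) ∧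
      (IsOddChord E c ↔ ¬ SameComp P (c.1, false) (c.2, false)) := by

  obtain ⟨ε, hε1, hε2⟩ := hcut
  -- the number of cut points is even
  have hPeven : Even P.card := by
    have ht := telescope P E ε hε1 0 N
    rw [ZMod.natCast_self, add_zero, cnt_circle, cnt_circle] at ht
    have hE2 : ((E.card : ℕ) : ZMod 2) = 0 :=
      (ZMod.natCast_eq_zero_iff _ 2).mpr ⟨chords.card, hdistinct⟩
    have hP2 : ((P.card : ℕ) : ZMod 2) = 0 := by
      have key : ∀ u v w : ZMod 2, u = u + v + w → w = 0 → v = 0 := by decide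
      exact key (ε 0) _ _ ht hE2
    have := (ZMod.natCast_eq_zero_iff P.card 2).mp hP2
    obtain ⟨t, htt⟩ := this
    exact ⟨t, by omega⟩
  intro c hc
  have hab : c.1 ≠ c.2 := hproper c hc
  obtain ⟨a, b⟩ := c
  simp only at hab
  have haE : a ∈ E := by
    rw [hE]; exact Finset.mem_union_left _ (Finset.mem_image.mpr ⟨(a, b), hc, rfl⟩)
  have hbE : b ∈ E := by
    rw [hE]; exact Finset.mem_union_right _ (Finset.mem_image.mpr ⟨(a, b), hc, rfl⟩)
  have hbP : b ∉ P := fun h => (Finset.disjoint_left.mp hPE h) hbE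
  have haP : a ∉ P := fun h => (Finset.disjoint_left.mp hPE h) haE
  set k : ℕ := (b - a).val with hkdef
  have hkN : k < N := ZMod.val_lt _
  have hk0 : k ≠ 0 := by
    rw [hkdef, Ne, ZMod.val_eq_zero, sub_eq_zero]
    exact fun h => hab h.symm
  have hak : a + (k : ZMod N) = b := by
    rw [hkdef, ZMod.natCast_rightInverse (b - a)]; ring
  set p : ℕ := (P.filter (fun x => strictBtw a b x)).card with hpdef
  set e : ℕ := (E.filter (fun x => strictBtw a b x)).card with hedef
  have hcntP : cnt P a k = p := by
    rw [cnt_arc P a k hkN, arc_split P a b hab, if_neg hbP, add_zero]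
  have hcntE : cnt E a k = e + 1 := by
    rw [cnt_arc E a k hkN, arc_split E a b hab, if_pos hbE]
  -- first equivalence
  have h1 : ((p : ℕ) : ZMod 2) = ((e : ℕ) : ZMod 2) := by
    have ht := telescope P E ε hε1 a k
    rw [hak, hcntP, hcntE] at ht
    have hne := hε2 (a, b) hc
    simp only at hne
    have key : ∀ u v w z : ZMod 2, u ≠ v → v = u + w + (z + 1) → w = z := by decide
    exact key (ε a) (ε b) _ _ hne (by rw [ht]; push_cast; ring)
  have hmod := (ZMod.natCast_eq_natCast_iff' p e 2).mp h1
  have hiff1 : Odd e ↔ Odd p := by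
    rw [Nat.odd_iff, Nat.odd_iff]; omega
  -- same-component criterion
  have h2 : SameComp P (a, false) (b, false) ↔ ¬ Odd p := by
    constructor
    · rintro ⟨m, hm | hm⟩
      · rw [iter_cover] at hm
        rw [Prod.ext_iff] at hm
        obtain ⟨hm1, hm2⟩ := hm
        have hno : ¬ Odd (cnt P a m) := by
          intro h; rw [if_pos h] at hm2; simp at hm2
        have hd : m = m % N + m / N * N := (Nat.mod_add_div' m N).symm
        have hres : m % N = k := by
          have hcast : ((m % N : ℕ) : ZMod N) = ((m : ℕ) : ZMod N) := by
            conv_rhs => rw [hd]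
            push_cast [ZMod.natCast_self]
            ring
          have hm' : ((m : ℕ) : ZMod N) = b - a := by linear_combination hm1
          have : ((m % N : ℕ) : ZMod N) = b - a := by rw [hcast, hm']
          have hv := congrArg ZMod.val this
          rwa [ZMod.val_cast_of_lt (Nat.mod_lt _ (Nat.pos_of_ne_zero (NeZero.ne N)))] at hv
        have hno' : ¬ Odd (cnt P a (m % N + m / N * N)) := by rw [← hd]; exact hno
        rw [cnt_period, hres, hcntP] at hno'
        rw [← odd_add_even_iff (hPeven.mul_left (m / N))]
        exact hno'
      · rw [iter_cover] at hm
        rw [Prod.ext_iff] at hm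
        obtain ⟨hm1, hm2⟩ := hm
        have hno : ¬ Odd (cnt P b m) := by
          intro h; rw [if_pos h] at hm2; simp at hm2
        set k' : ℕ := (a - b).val with hk'def
        have hk' : k' = N - k := by
          rw [hk'def, hkdef, show a - b = -(b - a) by ring, ZMod.neg_val,
            if_neg (sub_ne_zero.mpr (Ne.symm hab))]
        have hd : m = m % N + m / N * N := (Nat.mod_add_div' m N).symm
        have hres : m % N = k' := by
          have hcast : ((m % N : ℕ) : ZMod N) = ((m : ℕ) : ZMod N) := by
            conv_rhs => rw [hd]
            push_cast [ZMod.natCast_self]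
            ring
          have hm' : ((m : ℕ) : ZMod N) = a - b := by linear_combination hm1
          have : ((m % N : ℕ) : ZMod N) = a - b := by rw [hcast, hm']
          have hv := congrArg ZMod.val this
          rwa [ZMod.val_cast_of_lt (Nat.mod_lt _ (Nat.pos_of_ne_zero (NeZero.ne N)))] at hv
        have hno' : ¬ Odd (cnt P b (m % N + m / N * N)) := by rw [← hd]; exact hno
        rw [cnt_period, hres] at hno'
        rw [odd_add_even_iff (hPeven.mul_left (m / N))] at hno'
        -- split the full circle at a and b
        have hsplit : P.card = cnt P a k + cnt P b k' := by
          have hkk : k + k' = N := by omega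
          have h' : cnt P a (k + k') = cnt P a k + cnt P b k' := by rw [cnt_add, hak]
          rw [← h', hkk, cnt_circle]
        intro hodd
        rw [hcntP] at hsplit
        obtain ⟨t, htt⟩ := hPeven
        rw [Nat.odd_iff] at hodd hno'
        omega
    · intro h
      refine ⟨k, Or.inl ?_⟩
      rw [iter_cover, hak, hcntP, if_neg h]
  refine ⟨?_, ?_⟩
  · exact hiff1
  · rw [show IsOddChord E (a, b) = Odd e from rfl]
    rw [hiff1, h2]
    exact (not_not).symm
end

section
/- Let D be a virtual knot diagram with cut system P, and let φ(D,P) be its converted normal diagram (a 2-component virtual link diagram). Then the linking number of φ(D,P), defined as half the sum of signs of non-self classical crossings, equals the odd writhe of D, defined as the sum of signs of the odd classical crossings of D. -/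
open scoped Classical

/-! Since the chords have `2 · #chords` endpoints, the indicator of the endpoint set `E` sums to
zero in `ZMod 2`, so `E` has a mod-2 potential `g`, i.e. `g (x + 1) = g x + [x + 1 ∈ E]`. Taking
away `g` from the alternate orientation `ε` leaves a potential `f = ε - g` of the cut points `P`,
and `f x + b` is constant along the double covering; hence two points `(a, b)`, `(d, b)` of the
same copy lie on the same component iff `f a = f d`. For a chord from `a` to `d` we have
`ε d = ε a + 1` and, counting endpoints along the arc `(a, d]`,
`g d = g a + 1 + #(endpoints strictly between a and d)`, so `f a ≠ f d` exactly when the chord is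
odd. Each odd crossing is therefore non-self in both copies, and half the sum is the odd writhe. -/

open Finset

section Potential

variable {G : Type*} [AddCommMonoid G]

theorem apply_add_natCast_eq_add_sum {R : Type*} [AddMonoidWithOne R] {g w : R → G}
    (hg : ∀ x, g (x + 1) = g x + w (x + 1)) (a : R) (k : ℕ) :
    g (a + k) = g a + ∑ j ∈ Ioc 0 k, w (a + j) := by
  induction k with
  | zero => simp
  | succ k ih =>
    rw [sum_Ioc_succ_top k.zero_le, ← add_assoc, ← ih, Nat.cast_succ, ← add_assoc, hg,
      add_assoc]

theorem ZMod.exists_apply_add_one_eq_of_sum_eq_zero {N : ℕ} [NeZero N] {w : ZMod N → G}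
    (hw : ∑ x, w x = 0) : ∃ g : ZMod N → G, ∀ x, g (x + 1) = g x + w (x + 1) := by
  refine ⟨fun x => ∑ y ∈ univ.filter (·.val ≤ x.val), w y, fun x => ?_⟩
  have hx : x + 1 = ((x.val + 1 : ℕ) : ZMod N) := by simp
  rcases Nat.lt_or_ge (x.val + 1) N with hlt | hge
  · have hval : (x + 1).val = x.val + 1 := by rw [hx, ZMod.val_cast_of_lt hlt]
    have hfilter : univ.filter (fun y : ZMod N => y.val ≤ (x + 1).val)
        = insert (x + 1) (univ.filter (·.val ≤ x.val)) := by
      ext y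
      simp only [mem_filter, mem_univ, true_and, mem_insert]
      rw [← (ZMod.val_injective N).eq_iff, hval]
      omega
    simp only [hfilter]
    rw [sum_insert (by simp [hval]), add_comm]
  · have hval : x.val + 1 = N := by have := x.val_lt; omega
    have hzero : x + 1 = 0 := by rw [hx, hval, ZMod.natCast_self]
    have hall : univ.filter (fun y : ZMod N => y.val ≤ x.val) = univ := by
      ext y
      have := y.val_lt
      simp only [mem_filter, mem_univ, true_and, iff_true]
      omega
    simp only [hzero, hall, hw, zero_add, ZMod.val_zero, nonpos_iff_eq_zero, ZMod.val_eq_zero]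
    rw [filter_eq', if_pos (mem_univ _), sum_singleton]

end Potential

section Cover

variable {N : ℕ} (P : Finset (ZMod N)) {f : ZMod N → ZMod 2}

theorem fst_iterate_coverSucc (x : ZMod N × Bool) (k : ℕ) :
    ((coverSucc P)^[k] x).1 = x.1 + k := by
  induction k with
  | zero => simp
  | succ k ih =>
    rw [Function.iterate_succ_apply', coverSucc]
    split_ifs <;> simp [ih, add_assoc]

def coverLabel (f : ZMod N → ZMod 2) (x : ZMod N × Bool) : ZMod 2 := f x.1 + x.2.toNat

theorem coverLabel_coverSucc (hf : ∀ x, f (x + 1) = f x + if x + 1 ∈ P then 1 else 0)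
    (x : ZMod N × Bool) : coverLabel f (coverSucc P x) = coverLabel f x := by
  unfold coverSucc coverLabel
  have htwo : (1 + 1 : ZMod 2) = 0 := by decide
  split_ifs with h <;> cases x.2 <;> simp [hf, h, add_assoc, htwo]

theorem coverLabel_iterate_coverSucc (hf : ∀ x, f (x + 1) = f x + if x + 1 ∈ P then 1 else 0)
    (x : ZMod N × Bool) (k : ℕ) : coverLabel f ((coverSucc P)^[k] x) = coverLabel f x := by
  induction k with
  | zero => rfl
  | succ k ih => rw [Function.iterate_succ_apply', coverLabel_coverSucc P hf, ih]

theorem sameComp_iff_apply_eq [NeZero N]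
    (hf : ∀ x, f (x + 1) = f x + if x + 1 ∈ P then 1 else 0) (a c : ZMod N) (b : Bool) :
    SameComp P (a, b) (c, b) ↔ f a = f c := by
  constructor
  · rintro ⟨k, hk | hk⟩
    · have h := coverLabel_iterate_coverSucc P hf (a, b) k
      rw [hk] at h
      exact add_right_cancel h.symm
    · have h := coverLabel_iterate_coverSucc P hf (c, b) k
      rw [hk] at h
      exact add_right_cancel h
  · intro hac
    refine ⟨(c - a).val, Or.inl ?_⟩
    have hfst : ((coverSucc P)^[(c - a).val] (a, b)).1 = c := by simp [fst_iterate_coverSucc]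
    have hlabel := coverLabel_iterate_coverSucc P hf (a, b) (c - a).val
    rw [coverLabel, coverLabel, hfst, hac] at hlabel
    have htoNat : ∀ u v : Bool, (u.toNat : ZMod 2) = v.toNat → u = v := by decide
    exact Prod.ext hfst (htoNat _ _ (add_left_cancel hlabel))

end Cover

section Chord

variable {N : ℕ} [NeZero N]

theorem card_filter_strictBtw (S : Finset (ZMod N)) (a d : ZMod N) :
    #(S.filter (strictBtw a d)) =
      #((Ioo 0 (d - a).val).filter fun j : ℕ => a + (j : ZMod N) ∈ S) := by
  refine card_bij' (fun x _ => (x - a).val) (fun j _ => a + j) ?_ ?_ ?_ ?_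
  · intro x hx
    simp only [mem_filter, strictBtw] at hx
    simp only [mem_filter, mem_Ioo, ZMod.natCast_zmod_val, add_sub_cancel, hx.1, hx.2.1,
      ZMod.val_pos, sub_ne_zero, hx.2.2, ne_eq, not_false_eq_true, and_true]
  · intro j hj
    simp only [mem_filter, mem_Ioo] at hj
    have hjN : j < N := hj.1.2.trans (ZMod.val_lt _)
    simp only [mem_filter, strictBtw, add_sub_cancel_left, ZMod.val_cast_of_lt hjN, hj.2,
      hj.1.2, ne_eq, add_eq_left, true_and]
    rw [← ZMod.val_eq_zero, ZMod.val_cast_of_lt hjN]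
    exact hj.1.1.ne'
  · intro x _
    simp
  · intro j hj
    simp only [mem_filter, mem_Ioo] at hj
    simp [ZMod.val_cast_of_lt (hj.1.2.trans (ZMod.val_lt _))]

theorem apply_eq_add_one_add_card_filter_strictBtw {S : Finset (ZMod N)} {g : ZMod N → ZMod 2}
    (hg : ∀ x, g (x + 1) = g x + if x + 1 ∈ S then 1 else 0) {a d : ZMod N} (had : a ≠ d)
    (hd : d ∈ S) : g d = g a + 1 + #(S.filter (strictBtw a d)) := by
  have hr : 0 < (d - a).val := ZMod.val_pos.mpr (sub_ne_zero.mpr had.symm)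
  have hsum := apply_add_natCast_eq_add_sum (w := fun x => if x ∈ S then 1 else 0) hg a
    (d - a).val
  rw [ZMod.natCast_zmod_val, add_sub_cancel, ← Ioo_insert_right hr, sum_insert (by simp)] at hsum
  rw [hsum, ZMod.natCast_zmod_val, add_sub_cancel, if_pos hd, sum_boole, card_filter_strictBtw,
    add_assoc]

theorem not_sameComp_iff_isOddChord {P E : Finset (ZMod N)} {ε g : ZMod N → ZMod 2}
    (hε : ∀ x, ε (x + 1) = ε x + (if x + 1 ∈ P then 1 else 0) + (if x + 1 ∈ E then 1 else 0))
    (hg : ∀ x, g (x + 1) = g x + if x + 1 ∈ E then 1 else 0)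
    {a d : ZMod N} (hεad : ε a ≠ ε d) (had : a ≠ d) (hd : d ∈ E) (b : Bool) :
    ¬ SameComp P (a, b) (d, b) ↔ IsOddChord E (a, d) := by
  have hf : ∀ x, (ε - g) (x + 1) = (ε - g) x + if x + 1 ∈ P then 1 else 0 := by
    intro x
    simp only [Pi.sub_apply, hε, hg]
    ring
  have hεd : ε d = ε a + 1 := by
    have hZMod2 : ∀ u v : ZMod 2, u ≠ v → v = u + 1 := by decide
    exact hZMod2 _ _ hεad
  rw [sameComp_iff_apply_eq P hf, IsOddChord, ← ZMod.natCast_ne_zero_iff_odd, Pi.sub_apply,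
    Pi.sub_apply, hεd, apply_eq_add_one_add_card_filter_strictBtw hg had hd]
  refine not_congr ?_
  rw [show ∀ t : ZMod 2, ε a + 1 - (g a + 1 + t) = ε a - g a - t from fun t => by ring, eq_comm,
    sub_eq_self]

end Chord

theorem linkingNumber_eq_oddWrithe_general {N : ℕ} [NeZero N]
    (chords : Finset (ZMod N × ZMod N)) (E P : Finset (ZMod N))
    (sgn : ZMod N × ZMod N → ℤ)
    (hE : E = chords.image Prod.fst ∪ chords.image Prod.snd)
    (hproper : ∀ c ∈ chords, c.1 ≠ c.2)
    (hdistinct : E.card = 2 * chords.card)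
    (hcut : IsCutSystem chords E P) :
    (((∑ c ∈ chords, if ¬ SameComp P (c.1, false) (c.2, false)
          then sgn c else 0)
      + ∑ c ∈ chords, if ¬ SameComp P (c.1, true) (c.2, true)
          then sgn c else 0 : ℤ) : ℚ) / 2
      = ((∑ c ∈ chords, if IsOddChord E c then sgn c else 0 : ℤ) : ℚ) := by
  obtain ⟨ε, hε, hchords⟩ := hcut
  have hEeven : ∑ x, (if x ∈ E then 1 else 0 : ZMod 2) = 0 := by
    rw [sum_boole, filter_mem_eq_inter, univ_inter, hdistinct, Nat.cast_mul, Nat.cast_ofNat,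
      CharTwo.two_eq_zero (R := ZMod 2), zero_mul]
  obtain ⟨g, hg⟩ := ZMod.exists_apply_add_one_eq_of_sum_eq_zero hEeven
  have hsum (b : Bool) : (∑ c ∈ chords, if ¬ SameComp P (c.1, b) (c.2, b) then sgn c else 0)
      = ∑ c ∈ chords, if IsOddChord E c then sgn c else 0 := by
    refine sum_congr rfl fun c hc => if_congr ?_ rfl rfl
    have hc₂ : c.2 ∈ E := hE ▸ mem_union_right _ (mem_image_of_mem _ hc)
    exact not_sameComp_iff_isOddChord hε hg (hchords c hc) (hproper c hc) hc₂ b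
  rw [hsum, hsum]
  push_cast
  ring

/-- The linking number of the converted normal diagram `φ(D,P)` — half the sum
of the signs of its non-self classical crossings, these being the crossings of
the `D`-copy and of the mirror copy `D*` whose two strands lie on different
components (the sign of a mirror crossing equals the sign of the original) —
equals the odd writhe of `D`, the sum of the signs of the odd crossings. -/
theorem linkingNumber_eq_oddWrithe {N : ℕ} [NeZero N]
    (chords : Finset (ZMod N × ZMod N)) (E P : Finset (ZMod N))
    (sgn : ZMod N × ZMod N → ℤ)
    (hE : E = chords.image Prod.fst ∪ chords.image Prod.snd)
    (hproper : ∀ c ∈ chords, c.1 ≠ c.2)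
    (hdistinct : E.card = 2 * chords.card)
    (hPE : Disjoint P E)
    (hsgn : ∀ c ∈ chords, sgn c = 1 ∨ sgn c = -1)
    (hcut : IsCutSystem chords E P) :
    (((∑ c ∈ chords, if ¬ SameComp P (c.1, false) (c.2, false)
          then sgn c else 0)
      + ∑ c ∈ chords, if ¬ SameComp P (c.1, true) (c.2, true)
          then sgn c else 0 : ℤ) : ℚ) / 2
      = ((∑ c ∈ chords, if IsOddChord E c then sgn c else 0 : ℤ) : ℚ) :=
  linkingNumber_eq_oddWrithe_general chords E P sgn hE hproper hdistinct hcut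
end

section
/- For any virtual knot diagram D with cut systems P and P', the components partition of the double cover is well defined up to the claimed parity structure: both φ(D,P) and φ(D,P') are 2-component virtual link diagrams (for any nonempty cut system), and their linking numbers are equal. -/
open scoped Classical

/-- Twice the linking number of `φ(D,P)`: the sum of the signs of the classical
crossings of the `D`-copy and the mirror copy whose two strands lie on
different components. -/
noncomputable def lkTwice {N : ℕ} (chords : Finset (ZMod N × ZMod N))
    (sgn : ZMod N × ZMod N → ℤ) (P : Finset (ZMod N)) : ℤ :=
  (∑ c ∈ chords, if ¬ SameComp P (c.1, false) (c.2, false) then sgn c else 0)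
    + ∑ c ∈ chords, if ¬ SameComp P (c.1, true) (c.2, true) then sgn c else 0

/-!
Walking along the double cover, one changes sheet exactly at the cut points, so from `(a, s)`
one reaches `b` on sheet `s` shifted by the parity of the cut points on the arc `(a, b]`. An
alternate orientation comes back to itself after a full turn, and the chord endpoints are even
in number, so a cut system has an even number of points; hence that parity does not depend on
the way around the circle, and the cover has exactly the two components through `(0, false)`
and `(0, true)`. At a chord the alternate orientation flips, so the cut points and chord
endpoints on `(c.1, c.2]` are odd in number together: whether the two strands of a crossing lie
on different components is decided by the chord endpoints alone, whatever the cut system.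
-/

open Finset

lemma Nat.bodd_eq_false_iff_even (n : ℕ) : n.bodd = false ↔ Even n := by
  rw [Nat.even_iff, Nat.mod_two_of_bodd]
  cases n.bodd <;> simp

section CutCount

variable {N : ℕ}

def cutCount (P : Finset (ZMod N)) (a : ZMod N) (m : ℕ) : ℕ :=
  #{k ∈ range m | a + (k + 1 : ℕ) ∈ P}

@[simp]
lemma cutCount_zero (P : Finset (ZMod N)) (a : ZMod N) : cutCount P a 0 = 0 := by
  simp [cutCount]

lemma cutCount_succ (P : Finset (ZMod N)) (a : ZMod N) (m : ℕ) :
    cutCount P a (m + 1) = cutCount P a m + if a + (m + 1 : ℕ) ∈ P then 1 else 0 := by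
  unfold cutCount
  rw [range_add_one, filter_insert]
  split_ifs
  · rw [card_insert_of_notMem (by simp)]
  · rfl

lemma cutCount_add (P : Finset (ZMod N)) (a : ZMod N) (m n : ℕ) :
    cutCount P a (m + n) = cutCount P a m + cutCount P (a + m) n := by
  induction n with
  | zero => simp
  | succ n ih =>
    rw [← add_assoc, cutCount_succ, ih, cutCount_succ, add_assoc]
    push_cast
    ring_nf

lemma cutCount_self [NeZero N] (P : Finset (ZMod N)) (a : ZMod N) :
    cutCount P a N = #P := by
  refine card_nbij' (fun k => a + (k + 1 : ℕ)) (fun p => (p - a - 1).val) ?_ ?_ ?_ ?_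
  · intro k hk
    exact (mem_filter.mp hk).2
  · intro p hp
    simpa [ZMod.natCast_val, ZMod.val_lt] using hp
  · intro k hk
    have hkN : k < N := mem_range.mp (mem_filter.mp hk).1
    simp [ZMod.val_cast_of_lt hkN]
  · intro p _
    push_cast
    simp [ZMod.natCast_val]

lemma cutCount_mul [NeZero N] (P : Finset (ZMod N)) (a : ZMod N) (q : ℕ) :
    cutCount P a (N * q) = q * #P := by
  induction q with
  | zero => simp
  | succ q ih =>
    rw [Nat.mul_succ, cutCount_add, ih, Nat.cast_mul, ZMod.natCast_self, zero_mul, add_zero,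
      cutCount_self, Nat.succ_mul]

lemma bodd_cutCount_mod [NeZero N] {P : Finset (ZMod N)} (hP : Even #P) (a : ZMod N) (k : ℕ) :
    (cutCount P a k).bodd = (cutCount P a (k % N)).bodd := by
  conv_lhs => rw [← Nat.div_add_mod k N]
  rw [cutCount_add, cutCount_mul, Nat.bodd_add, Nat.bodd_mul,
    (Nat.bodd_eq_false_iff_even _).mpr hP]
  simp

end CutCount

section Cover

variable {N : ℕ}

def cutParity (P : Finset (ZMod N)) (a b : ZMod N) : Bool :=
  (cutCount P a (b - a).val).bodd

@[simp]
lemma cutParity_self (P : Finset (ZMod N)) (a : ZMod N) : cutParity P a a = false := by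
  simp [cutParity]

lemma cutParity_comm [NeZero N] {P : Finset (ZMod N)} (hP : Even #P) (a b : ZMod N) :
    cutParity P b a = cutParity P a b := by
  have h := bodd_cutCount_mod hP a ((b - a).val + (a - b).val)
  rw [← ZMod.val_add, sub_add_sub_cancel, sub_self, ZMod.val_zero, cutCount_zero, Nat.bodd_zero,
    cutCount_add, ZMod.natCast_val, ZMod.cast_id', id, add_sub_cancel, Nat.bodd_add] at h
  unfold cutParity
  revert h
  cases (cutCount P a (b - a).val).bodd <;> cases (cutCount P b (a - b).val).bodd <;> simp

lemma iterate_coverSucc (P : Finset (ZMod N)) (a : ZMod N) (s : Bool) (m : ℕ) :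
    (coverSucc P)^[m] (a, s) = (a + m, xor s (cutCount P a m).bodd) := by
  induction m with
  | zero => simp
  | succ m ih =>
    rw [Function.iterate_succ_apply', ih, coverSucc, cutCount_succ, Nat.bodd_add]
    push_cast
    rw [← add_assoc]
    split_ifs <;> simp

lemma iterate_coverSucc_eq_cutParity [NeZero N] {P : Finset (ZMod N)} (hP : Even #P)
    (a : ZMod N) (s : Bool) (m : ℕ) :
    (coverSucc P)^[m] (a, s) = (a + m, xor s (cutParity P a (a + m))) := by
  rw [iterate_coverSucc, cutParity, add_sub_cancel_left, ZMod.val_natCast,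
    bodd_cutCount_mod hP]

lemma sameComp_iff [NeZero N] {P : Finset (ZMod N)} (hP : Even #P) (a b : ZMod N) (s t : Bool) :
    SameComp P (a, s) (b, t) ↔ t = xor s (cutParity P a b) := by
  constructor
  · rintro ⟨k, h | h⟩
    · rw [iterate_coverSucc_eq_cutParity hP, Prod.mk.injEq] at h
      rw [← h.2, h.1]
    · rw [iterate_coverSucc_eq_cutParity hP, Prod.mk.injEq] at h
      rw [← h.2, h.1, cutParity_comm hP]
      cases t <;> cases cutParity P a b <;> rfl
  · intro ht
    refine ⟨(b - a).val, Or.inl ?_⟩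
    rw [iterate_coverSucc_eq_cutParity hP, ZMod.natCast_val, ZMod.cast_id', id, add_sub_cancel,
      ← ht]

lemma two_components [NeZero N] {P : Finset (ZMod N)} (hP : Even #P) :
    ∃ x y : ZMod N × Bool, ¬ SameComp P x y ∧
      ∀ z : ZMod N × Bool, SameComp P z x ∨ SameComp P z y := by
  refine ⟨(0, false), (0, true), by simp [sameComp_iff hP], ?_⟩
  rintro ⟨a, s⟩
  simp only [sameComp_iff hP]
  cases xor s (cutParity P a 0) <;> simp

lemma not_sameComp_iff [NeZero N] {P : Finset (ZMod N)} (hP : Even #P) (a b : ZMod N) (s : Bool) :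
    ¬ SameComp P (a, s) (b, s) ↔ cutParity P a b = true := by
  rw [sameComp_iff hP]
  cases s <;> cases cutParity P a b <;> decide

end Cover

section CutSystem

variable {N : ℕ} {chords : Finset (ZMod N × ZMod N)} {E P : Finset (ZMod N)}

lemma orientation_add_natCast {ε : ZMod N → ZMod 2}
    (hε : ∀ x : ZMod N, ε (x + 1) = ε x + (if x + 1 ∈ P then 1 else 0)
        + (if x + 1 ∈ E then 1 else 0)) (a : ZMod N) (m : ℕ) :
    ε (a + m) = ε a + (cutCount P a m + cutCount E a m : ℕ) := by
  induction m with
  | zero => simp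
  | succ m ih =>
    have hpt : a + ((m + 1 : ℕ) : ZMod N) = a + m + 1 := by push_cast; ring
    rw [hpt, hε, ih, cutCount_succ, cutCount_succ, ← hpt]
    split_ifs <;> push_cast <;> ring

lemma IsCutSystem.even_card [NeZero N] (hcut : IsCutSystem chords E P) (hE : Even #E) :
    Even #P := by
  obtain ⟨ε, hε, -⟩ := hcut
  have h := orientation_add_natCast hε 0 N
  rw [ZMod.natCast_self, add_zero, cutCount_self, cutCount_self, left_eq_add,
    ZMod.natCast_eq_zero_iff_even] at h
  exact (Nat.even_add.mp h).mpr hE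

lemma IsCutSystem.cutParity_chord [NeZero N] (hcut : IsCutSystem chords E P)
    {c : ZMod N × ZMod N} (hc : c ∈ chords) :
    xor (cutParity P c.1 c.2) (cutParity E c.1 c.2) = true := by
  obtain ⟨ε, hε, hflip⟩ := hcut
  have h := orientation_add_natCast hε c.1 (c.2 - c.1).val
  rw [ZMod.natCast_val, ZMod.cast_id', id, add_sub_cancel] at h
  have hodd : ¬ Even (cutCount P c.1 (c.2 - c.1).val + cutCount E c.1 (c.2 - c.1).val) := by
    rw [← ZMod.natCast_eq_zero_iff_even]
    intro h0
    exact hflip c hc (by rw [h, h0, add_zero])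
  rw [← Nat.bodd_eq_false_iff_even, Nat.bodd_add] at hodd
  simpa [cutParity] using hodd

lemma IsCutSystem.not_sameComp_chord_iff [NeZero N] (hcut : IsCutSystem chords E P)
    (hE : Even #E) {c : ZMod N × ZMod N} (hc : c ∈ chords) (s : Bool) :
    ¬ SameComp P (c.1, s) (c.2, s) ↔ cutParity E c.1 c.2 = false := by
  rw [not_sameComp_iff (hcut.even_card hE)]
  have h := hcut.cutParity_chord hc
  revert h
  cases cutParity P c.1 c.2 <;> cases cutParity E c.1 c.2 <;> decide

lemma IsCutSystem.lkTwice_eq [NeZero N] (hcut : IsCutSystem chords E P) (hE : Even #E)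
    (sgn : ZMod N × ZMod N → ℤ) :
    lkTwice chords sgn P = 2 * ∑ c ∈ chords, if cutParity E c.1 c.2 = false then sgn c else 0 := by
  rw [lkTwice, two_mul]
  congr 1 <;> refine sum_congr rfl fun c hc => ?_ <;> simp only [hcut.not_sameComp_chord_iff hE hc]

end CutSystem

theorem doubleCover_two_components_and_linkingNumber_welldefined_general
    {N : ℕ} [NeZero N]
    (chords : Finset (ZMod N × ZMod N)) (E P P' : Finset (ZMod N))
    (sgn : ZMod N × ZMod N → ℤ)
    (hdistinct : E.card = 2 * chords.card)
    (hcut : IsCutSystem chords E P) (hcut' : IsCutSystem chords E P') :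
    (∃ x y : ZMod N × Bool, ¬ SameComp P x y ∧
      ∀ z : ZMod N × Bool, SameComp P z x ∨ SameComp P z y) ∧
    (∃ x y : ZMod N × Bool, ¬ SameComp P' x y ∧
      ∀ z : ZMod N × Bool, SameComp P' z x ∨ SameComp P' z y) ∧
    (lkTwice chords sgn P : ℚ) / 2 = (lkTwice chords sgn P' : ℚ) / 2 := by
  have hE : Even #E := hdistinct ▸ even_two_mul _
  refine ⟨two_components (hcut.even_card hE), two_components (hcut'.even_card hE), ?_⟩
  rw [hcut.lkTwice_eq hE, hcut'.lkTwice_eq hE]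

/-- For any virtual knot diagram `D` with (nonempty) cut systems `P` and `P'`,
both converted diagrams `φ(D,P)` and `φ(D,P')` are 2-component virtual link
diagrams, and their linking numbers coincide. -/
theorem doubleCover_two_components_and_linkingNumber_welldefined
    {N : ℕ} [NeZero N]
    (chords : Finset (ZMod N × ZMod N)) (E P P' : Finset (ZMod N))
    (sgn : ZMod N × ZMod N → ℤ)
    (hE : E = chords.image Prod.fst ∪ chords.image Prod.snd)
    (hproper : ∀ c ∈ chords, c.1 ≠ c.2)
    (hdistinct : E.card = 2 * chords.card)
    (hPE : Disjoint P E) (hPE' : Disjoint P' E)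
    (hP : P.Nonempty) (hP' : P'.Nonempty)
    (hcut : IsCutSystem chords E P) (hcut' : IsCutSystem chords E P') :
    (∃ x y : ZMod N × Bool, ¬ SameComp P x y ∧
      ∀ z : ZMod N × Bool, SameComp P z x ∨ SameComp P z y) ∧
    (∃ x y : ZMod N × Bool, ¬ SameComp P' x y ∧
      ∀ z : ZMod N × Bool, SameComp P' z x ∨ SameComp P' z y) ∧
    (lkTwice chords sgn P : ℚ) / 2 = (lkTwice chords sgn P' : ℚ) / 2 :=
  doubleCover_two_components_and_linkingNumber_welldefined_general chords E P P' sgn hdistinct hcut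
    hcut'
end
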